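/- Let A = {a,b} and n ≥ 2, m ≥ 4 with 2 ≤ n ≤ m - 2. Suppose the m - n holes of a partial word x (obtained from a⋄^{m-2}a by filling n - 2 interior holes with a, leaving m - n holes) do not form a contiguous block. Then the two-sided infinite word of period m - 1 obtained by repeating a^{n-1} b^{m-n} avoids both x and the partial word b' obtained from b⋄^{m-2}b by filling all its interior holes with b except n - 2 of them (i.e., any partial word y compatible with b⋄^{m-2}b, all of whose defined positions carry b, with h(y) = n - 2). -/
import Mathlib


/-- The two-letter alphabet. -/
inductive AB | a | b
deriving DecidableEq
open AB

abbrev PW (m : ℕ) (A : Type) := Fin m → Option A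

def Meets {m : ℕ} {A : Type} (w : ℤ → A) (u : PW m A) : Prop :=
  ∃ i : ℤ, ∀ j : Fin m, ∀ x : A, u j = some x → w (i + (j : ℕ)) = x

def periodic {A : Type} (P : ℕ) (f : ℕ → A) : ℤ → A :=
  fun i => f ((i % (P : ℤ)).toNat)

lemma key_eval {A : Type} (P : ℕ) (hP : 0 < P) (f : ℕ → A) (i : ℤ) (j : ℕ) :
    periodic P f (i + (j : ℤ)) = f (((i % (P : ℤ)).toNat + j) % P) := by
  unfold periodic
  congr 1
  have hPz : (0:ℤ) < (P:ℤ) := by exact_mod_cast hP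
  have hnn : 0 ≤ i % (P:ℤ) := Int.emod_nonneg i (by omega)
  have h1 : ((((i % (P:ℤ)).toNat + j) % P : ℕ) : ℤ) = (i + j) % P := by
    push_cast [Int.toNat_of_nonneg hnn]
    exact Int.emod_add_emod i P j
  omega

lemma mod_big {P t : ℕ} (h1 : P ≤ t) (h2 : t < 2*P) : t % P = t - P := by
  rw [Nat.mod_eq_sub_mod h1, Nat.mod_eq_of_lt (by omega)]

lemma card_block (m s k : ℕ) (hk : s + k ≤ m) :
    (Finset.univ.filter (fun j : Fin m => s ≤ (j:ℕ) ∧ (j:ℕ) < s + k)).card = k := by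
  rw [show k = (Finset.Ico s (s+k)).card by simp]
  apply Finset.card_bij (fun (j : Fin m) _ => (j : ℕ))
  · intro j hj; simp at hj ⊢; omega
  · intro j1 h1 j2 h2 h; exact Fin.ext h
  · intro t ht
    simp at ht
    exact ⟨⟨t, by omega⟩, by simp; omega, rfl⟩


/-- If x is obtained from a⋄^(m-2)a by filling n-2 holes with a (so x has m-n holes)
and the holes of x do not form a contiguous block, then the word repeating
a^(n-1) b^(m-n) avoids x, and also avoids every partial word y obtained from
b⋄^(m-2)b by filling holes with b so that exactly n-2 holes remain. -/
theorem stmt_18 (m n : ℕ) (hm : 4 ≤ m) (hn : 2 ≤ n) (hnm : n ≤ m - 2)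
    (x : PW m AB)
    (hx0 : x ⟨0, by omega⟩ = some a) (hxm : x ⟨m - 1, by omega⟩ = some a)
    (hxa : ∀ j, ∀ t : AB, x j = some t → t = a)
    (hxholes : (Finset.univ.filter (fun j : Fin m => x j = none)).card = m - n)
    (hxnc : ¬ ∃ s : ℕ, ∀ j : Fin m,
      x j = none ↔ (s ≤ (j : ℕ) ∧ (j : ℕ) < s + (m - n))) :
    (¬ Meets (periodic (m - 1) (fun t => if t < n - 1 then a else b)) x) ∧
    (∀ y : PW m AB,
      y ⟨0, by omega⟩ = some b → y ⟨m - 1, by omega⟩ = some b →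
      (∀ j, ∀ t : AB, y j = some t → t = b) →
      (Finset.univ.filter (fun j : Fin m => y j = none)).card = n - 2 →
      ¬ Meets (periodic (m - 1) (fun t => if t < n - 1 then a else b)) y) := by
  have hP : 0 < m - 1 := by omega
  constructor
  · rintro ⟨i, hi⟩
    set r := (i % ((m-1 : ℕ) : ℤ)).toNat with hrdef
    have hrP : r < m - 1 := by
      have h1 : i % ((m-1:ℕ):ℤ) < ((m-1:ℕ):ℤ) :=
        Int.emod_lt_of_pos i (by exact_mod_cast hP)
      omega
    have hw : ∀ (j : Fin m) (t : AB), x j = some t →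
        (if (r + (j:ℕ)) % (m-1) < n - 1 then a else b) = t := by
      intro j t hj
      have h := hi j t hj
      rwa [key_eval (m-1) hP _ i (j:ℕ)] at h
    have hr0 : r < n - 1 := by
      have h0 := hw ⟨0, by omega⟩ a hx0
      simp only [Nat.add_zero] at h0
      simp only [Nat.mod_eq_of_lt hrP] at h0
      by_contra hc
      rw [if_neg hc] at h0
      exact absurd h0 (by decide)
    set s := n - 1 - r with hsdef
    have hsub : (Finset.univ.filter (fun j : Fin m => s ≤ (j:ℕ) ∧ (j:ℕ) < s + (m-n)))
        ⊆ (Finset.univ.filter (fun j : Fin m => x j = none)) := by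
      intro j hj
      simp only [Finset.mem_filter, Finset.mem_univ, true_and] at hj ⊢
      rcases hx : x j with _ | t
      · rfl
      · exfalso
        have ht := hxa j t hx
        subst ht
        have h := hw j a hx
        rw [Nat.mod_eq_of_lt (by omega)] at h
        rw [if_neg (by omega)] at h
        exact absurd h (by decide)
    have heq := Finset.eq_of_subset_of_card_le hsub
      (by rw [hxholes, card_block m s (m-n) (by omega)])
    apply hxnc
    refine ⟨s, fun j => ?_⟩
    have hmem : j ∈ (Finset.univ.filter (fun j : Fin m => x j = none)) ↔
        j ∈ (Finset.univ.filter (fun j : Fin m => s ≤ (j:ℕ) ∧ (j:ℕ) < s + (m-n))) := by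
      rw [heq]
    simpa using hmem
  · rintro y hy0 hym hyb hyh ⟨i, hi⟩
    set r := (i % ((m-1 : ℕ) : ℤ)).toNat with hrdef
    have hrP : r < m - 1 := by
      have h1 : i % ((m-1:ℕ):ℤ) < ((m-1:ℕ):ℤ) :=
        Int.emod_lt_of_pos i (by exact_mod_cast hP)
      omega
    have hw : ∀ (j : Fin m) (t : AB), y j = some t →
        (if (r + (j:ℕ)) % (m-1) < n - 1 then a else b) = t := by
      intro j t hj
      have h := hi j t hj
      rwa [key_eval (m-1) hP _ i (j:ℕ)] at h
    have hr0 : n - 1 ≤ r := by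
      have h0 := hw ⟨0, by omega⟩ b hy0
      simp only [Nat.add_zero] at h0
      simp only [Nat.mod_eq_of_lt hrP] at h0
      by_contra hc
      rw [if_pos (by omega)] at h0
      exact absurd h0 (by decide)
    set s := m - 1 - r with hsdef
    have hsub : (Finset.univ.filter (fun j : Fin m => s ≤ (j:ℕ) ∧ (j:ℕ) < s + (n-1)))
        ⊆ (Finset.univ.filter (fun j : Fin m => y j = none)) := by
      intro j hj
      simp only [Finset.mem_filter, Finset.mem_univ, true_and] at hj ⊢
      rcases hy : y j with _ | t
      · rfl
      · exfalso
        have ht := hyb j t hy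
        subst ht
        have h := hw j b hy
        rw [mod_big (by omega) (by omega)] at h
        rw [if_pos (by omega)] at h
        exact absurd h (by decide)
    have hle := Finset.card_le_card hsub
    rw [hyh, card_block m s (n-1) (by omega)] at hle
    omega
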